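/- arXiv:1611.05385 — 9 statements merged into one kernel-verified Lean document; each statement's English description precedes it below -/
import Mathlib

section
/- Let ζ, η ∈ {+1,-1}, let Z, Y, W ∈ ℝ, and suppose (ζ, Z) ≠ (+1, mQ) for a fixed real mQ. Then the equation max[mQ - Z + W + S(η), W + S(-ζη), A + 2mQ + S(-ζ)] = max[mQ - Z + W + S(-η), W + S(ζη), A + 2mQ + S(ζ)] (with S(+1)=0, S(-1)=-∞ and conventions max with -∞ terms dropping them) holds if and only if W = A + 2mQ - max(mQ - Z, 0) and η = ζ if Z < mQ, η = -1 if Z ≥ mQ. -/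
/-!
Since `S` is `0` at `+1` and `-∞` at `-1`, each of the four sign choices `(ζ, η)` switches off
some of the six terms, and the equation becomes an identity between maxima of real numbers:
`mQ - Z + W = max W B` and `W = max (mQ - Z + W) B` for `ζ = 1`, `B = max (mQ - Z + W) W`
for `ζ = η = -1` (with `B = A + 2 mQ`), while for `ζ = -1, η = 1` the right side is `-∞`
and the left side is finite. Each real identity is settled by comparing `mQ - Z` with `0`.
-/

/-- Sign-encoding function `S : {+1,-1} → {0,-∞}` (values in the extended reals). -/
noncomputable def S (ω : ℝ) : EReal := if ω = 1 then 0 else ⊥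

lemma S_one : S 1 = 0 := if_pos rfl

lemma S_neg_one : S (-1) = ⊥ := if_neg (by norm_num)

lemma EReal.coe_max (x y : ℝ) : ((max x y : ℝ) : EReal) = max (x : EReal) y :=
  EReal.coe_strictMono.monotone.map_max

section RealMax

variable {m z W B : ℝ}

lemma sub_add_eq_max_iff (hz : z ≠ m) :
    m - z + W = max W B ↔ W = B - max (m - z) 0 ∧ z < m := by
  grind

lemma eq_max_sub_add_iff (hz : z ≠ m) :
    W = max (m - z + W) B ↔ W = B - max (m - z) 0 ∧ ¬ z < m := by
  grind

lemma eq_max_sub_add_self_iff : B = max (m - z + W) W ↔ W = B - max (m - z) 0 := by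
  grind

end RealMax

theorem stmt2 (A mQ : ℝ) (ζ η : ℝ) (hζ : ζ = 1 ∨ ζ = -1) (hη : η = 1 ∨ η = -1)
    (Z W : ℝ) (hne : ¬ (ζ = 1 ∧ Z = mQ)) :
    (max (((mQ - Z + W : ℝ) : EReal) + S η)
        (max (((W : ℝ) : EReal) + S (-(ζ * η))) (((A + 2 * mQ : ℝ) : EReal) + S (-ζ)))
      = max (((mQ - Z + W : ℝ) : EReal) + S (-η))
        (max (((W : ℝ) : EReal) + S (ζ * η)) (((A + 2 * mQ : ℝ) : EReal) + S ζ)))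
    ↔ (W = A + 2 * mQ - max (mQ - Z) 0 ∧ η = if Z < mQ then ζ else -1) := by
  have hZ : ζ = 1 → Z ≠ mQ := fun h₁ h₂ => hne ⟨h₁, h₂⟩
  rcases hζ with rfl | rfl <;> rcases hη with rfl | rfl <;>
    simp only [neg_neg, mul_one, mul_neg, S_one, S_neg_one, EReal.add_bot, add_zero,
      max_bot_left, max_bot_right, ← EReal.coe_max, EReal.coe_eq_coe_iff, EReal.coe_ne_bot,
      ite_self]
  · rw [sub_add_eq_max_iff (hZ rfl)]
    norm_num
  · rw [eq_max_sub_add_iff (hZ rfl)]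
    norm_num
  · norm_num
  · rw [eq_max_sub_add_self_iff]
    simp
end

section
/- Let ζ, η ∈ {+1,-1} and Z, Y, W ∈ ℝ, and suppose (ζ, Z) = (+1, mQ). Then the equation max[mQ - Z + W + S(η), W + S(-ζη), A + 2mQ + S(-ζ)] = max[mQ - Z + W + S(-η), W + S(ζη), A + 2mQ + S(ζ)] holds if and only if W ≥ A + 2mQ. -/
theorem stmt3 (A mQ : ℝ) (ζ η : ℝ) (hζ : ζ = 1) (hη : η = 1 ∨ η = -1)
    (Z W : ℝ) (hZ : Z = mQ) :
    (max (((mQ - Z + W : ℝ) : EReal) + S η)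
        (max (((W : ℝ) : EReal) + S (-(ζ * η))) (((A + 2 * mQ : ℝ) : EReal) + S (-ζ)))
      = max (((mQ - Z + W : ℝ) : EReal) + S (-η))
        (max (((W : ℝ) : EReal) + S (ζ * η)) (((A + 2 * mQ : ℝ) : EReal) + S ζ)))
    ↔ A + 2 * mQ ≤ W := by
  subst hζ hZ
  rcases hη with h | h <;> subst h <;>
    simp [S, max_comm, max_eq_left_iff, EReal.coe_le_coe_iff] <;>
    norm_num <;> exact_mod_cast Iff.rfl
end

section
/- Let η', ζ', ζ ∈ {+1,-1} and Y', Z', Z ∈ ℝ with (η', Y') ≠ (+1, 0). Then the equation max[Y' + S(η'), Z + Z' + S(-ζ'ζ)] = max[Y' + S(-η'), Z + Z' + S(ζ'ζ), 0] holds if and only if Z + Z' = max(Y', 0) and ζ'ζ = η' if Y' > 0, ζ'ζ = -1 if Y' ≤ 0. -/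
@[simp, norm_cast]
lemma EReal.coe_max_s4 (a b : ℝ) : ((max a b : ℝ) : EReal) = max (a : EReal) b :=
  EReal.coe_strictMono.monotone.map_max

section LinearOrder

variable {α : Type*} [LinearOrder α] {a b c : α}

lemma eq_max_iff_eq_max_and_lt (h : a ≠ c) : a = max b c ↔ b = max a c ∧ c < a := by
  grind

lemma max_eq_iff_eq_max_and_le (h : a ≠ c) : max a b = c ↔ b = max a c ∧ a ≤ c := by
  grind

end LinearOrder

theorem stmt4 (η' ζ' ζ : ℝ) (hη' : η' = 1 ∨ η' = -1) (hζ' : ζ' = 1 ∨ ζ' = -1)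
    (hζ : ζ = 1 ∨ ζ = -1) (Y' Z' Z : ℝ) (hne : ¬ (η' = 1 ∧ Y' = 0)) :
    (max (((Y' : ℝ) : EReal) + S η') (((Z + Z' : ℝ) : EReal) + S (-(ζ' * ζ)))
      = max (((Y' : ℝ) : EReal) + S (-η'))
        (max (((Z + Z' : ℝ) : EReal) + S (ζ' * ζ)) (0 : EReal)))
    ↔ (Z + Z' = max Y' 0 ∧ ζ' * ζ = if 0 < Y' then η' else -1) := by
  have hσ : ζ' * ζ = 1 ∨ ζ' * ζ = -1 := by
    rcases hζ' with rfl | rfl <;> rcases hζ with rfl | rfl <;> norm_num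
  generalize ζ' * ζ = σ at hσ ⊢
  generalize Z + Z' = W
  rcases hη' with rfl | rfl <;> rcases hσ with rfl | rfl <;>
    simp only [S_one, S_neg_one, neg_neg, add_zero, EReal.add_bot, bot_sup_eq, sup_bot_eq]
  · norm_cast
    simpa using eq_max_iff_eq_max_and_lt fun h => hne ⟨rfl, h⟩
  · norm_cast
    simpa using max_eq_iff_eq_max_and_le fun h => hne ⟨rfl, h⟩
  · exact iff_of_false (by simp [eq_comm (a := ⊥)]) (by norm_num)
  · norm_cast
    simp
end

section
/- There exists no pair of sequences ζ : ℤ → {+1,-1}, Z : ℤ → ℝ satisfying, for all m ∈ ℤ, the relations Z_m + Z_{m+1} > 0 and Z_{m+1} = -Z_m + A + 2mQ - max(0, mQ - Z_m) - (Z_{m-1} + Z_m), given fixed reals A and Q with Q < 0. -/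
theorem stmt6 (Q A : ℝ) (hQ : Q < 0) :
    ¬ ∃ (ζ : ℤ → ℝ) (Z : ℤ → ℝ), (∀ m : ℤ, ζ m = 1 ∨ ζ m = -1) ∧
      ∀ m : ℤ, 0 < Z m + Z (m + 1) ∧
        Z (m + 1) = -Z m + A + 2 * (m : ℝ) * Q - max 0 ((m : ℝ) * Q - Z m)
          - (Z (m - 1) + Z m) := by
  rintro ⟨ζ, Z, hζ, h⟩
  set m : ℤ := ⌈A / (-2 * Q)⌉ with hm
  have hQ2 : (0:ℝ) < -2 * Q := by linarith
  have hmA : A + 2 * (m : ℝ) * Q ≤ 0 := by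
    have h1 : A / (-2 * Q) ≤ (m : ℝ) := Int.le_ceil _
    have h2 := (div_le_iff₀ hQ2).mp h1
    nlinarith
  obtain ⟨hp, he⟩ := h m
  have hp' := (h (m - 1)).1
  have hmm : (m - 1) + 1 = m := by ring
  rw [hmm] at hp'
  have hmax : 0 ≤ max 0 ((m : ℝ) * Q - Z m) := le_max_left _ _
  linarith
end

section
/- Fix Q < 0, A ∈ ℝ, m' ∈ ℤ, K ∈ ℕ, signs η, ζ ∈ {+1,-1}, and reals C', D'. Define for 0 ≤ k ≤ K+1 (as applicable): Y_{m'+3k} = 2kQ + D', Z_{m'+3k} = -k²Q - C' - kD', Y_{m'+3k+1} = (m' - k² + k)Q + A - C' - (k+1)D', Z_{m'+3k+1} = (m' + k)Q + A - D', Y_{m'+3k+2} = (m' + k² + 3k + 1)Q + A + C' + kD', Z_{m'+3k+2} = (k+1)²Q + C' + (k+1)D'. Assume Z_m < mQ for m' ≤ m ≤ m'+3K+2, Y_{m'+3k+1} > 0 and Y_{m'+3k+2} > 0 and Y_{m'+3k+3} < 0 for k = 0,…,K. Then these values satisfy Y_{m+1} + Y_m = A + 2mQ - max(mQ - Z_m,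 0) for m' ≤ m ≤ m'+3K+2 and Z_{m+1} + Z_m = max(Y_{m+1}, 0) for m' ≤ m ≤ m'+3K+2. -/
theorem stmt11 (Q A : ℝ) (hQ : Q < 0) (m' : ℤ) (K : ℕ) (C' D' : ℝ) (Y Z : ℤ → ℝ)
    (hY0 : ∀ k : ℕ, k ≤ K + 1 → Y (m' + 3 * (k : ℤ)) = 2 * (k : ℝ) * Q + D')
    (hZ0 : ∀ k : ℕ, k ≤ K + 1 →
      Z (m' + 3 * (k : ℤ)) = -(k : ℝ) ^ 2 * Q - C' - (k : ℝ) * D')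
    (hY1 : ∀ k : ℕ, k ≤ K →
      Y (m' + 3 * (k : ℤ) + 1) = ((m' : ℝ) - (k : ℝ) ^ 2 + (k : ℝ)) * Q + A - C' - ((k : ℝ) + 1) * D')
    (hZ1 : ∀ k : ℕ, k ≤ K →
      Z (m' + 3 * (k : ℤ) + 1) = ((m' : ℝ) + (k : ℝ)) * Q + A - D')
    (hY2 : ∀ k : ℕ, k ≤ K →
      Y (m' + 3 * (k : ℤ) + 2) = ((m' : ℝ) + (k : ℝ) ^ 2 + 3 * (k : ℝ) + 1) * Q + A + C' + (k : ℝ) * D')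
    (hZ2 : ∀ k : ℕ, k ≤ K →
      Z (m' + 3 * (k : ℤ) + 2) = ((k : ℝ) + 1) ^ 2 * Q + C' + ((k : ℝ) + 1) * D')
    (hZlt : ∀ m : ℤ, m' ≤ m → m ≤ m' + 3 * (K : ℤ) + 2 → Z m < (m : ℝ) * Q)
    (hYpos1 : ∀ k : ℕ, k ≤ K → 0 < Y (m' + 3 * (k : ℤ) + 1))
    (hYpos2 : ∀ k : ℕ, k ≤ K → 0 < Y (m' + 3 * (k : ℤ) + 2))
    (hYneg3 : ∀ k : ℕ, k ≤ K → Y (m' + 3 * (k : ℤ) + 3) < 0) :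
    ∀ m : ℤ, m' ≤ m → m ≤ m' + 3 * (K : ℤ) + 2 →
      Y (m + 1) + Y m = A + 2 * (m : ℝ) * Q - max ((m : ℝ) * Q - Z m) 0 ∧
      Z (m + 1) + Z m = max (Y (m + 1)) 0 := by
  intro m hm1 hm2
  obtain ⟨n, hn⟩ : ∃ n : ℕ, m = m' + (n : ℤ) := ⟨(m - m').toNat, by omega⟩
  have hn2 : (n : ℤ) ≤ 3 * (K : ℤ) + 2 := by omega
  set k := n / 3 with hk
  have hkK : k ≤ K := by omega
  have hzm := hZlt m hm1 hm2
  have h3 : n % 3 = 0 ∨ n % 3 = 1 ∨ n % 3 = 2 := by omega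
  rcases h3 with h3 | h3 | h3
  · have hm : m = m' + 3 * (k : ℤ) := by omega
    subst hm
    rw [hZ0 k (by omega)] at hzm
    have hpos := hYpos1 k hkK
    rw [hY1 k hkK] at hpos ⊢
    rw [hY0 k (by omega), hZ0 k (by omega), hZ1 k hkK]
    constructor
    · rw [max_eq_left (by push_cast at hzm ⊢; linarith)]
      push_cast; ring
    · rw [max_eq_left hpos.le]
      push_cast; ring
  · have hm : m = m' + 3 * (k : ℤ) + 1 := by omega
    subst hm
    rw [hZ1 k hkK] at hzm
    have hpos := hYpos2 k hkK
    rw [hY2 k hkK] at hpos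
    have e2 : m' + 3 * (k : ℤ) + 1 + 1 = m' + 3 * (k : ℤ) + 2 := by ring
    rw [e2, hY2 k hkK, hZ2 k hkK, hY1 k hkK, hZ1 k hkK]
    constructor
    · rw [max_eq_left (by push_cast at hzm ⊢; linarith)]
      push_cast; ring
    · rw [max_eq_left hpos.le]
      push_cast; ring
  · have hm : m = m' + 3 * (k : ℤ) + 2 := by omega
    subst hm
    rw [hZ2 k hkK] at hzm
    have hneg := hYneg3 k hkK
    have e3 : m' + 3 * (k : ℤ) + 2 + 1 = m' + 3 * ((k + 1 : ℕ) : ℤ) := by push_cast; ring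
    have e3' : m' + 3 * (k : ℤ) + 3 = m' + 3 * ((k + 1 : ℕ) : ℤ) := by push_cast; ring
    rw [e3', hY0 (k + 1) (by omega)] at hneg
    rw [e3, hY0 (k + 1) (by omega)]
    rw [hY2 k hkK, hZ0 (k + 1) (by omega), hZ2 k hkK]
    constructor
    · rw [max_eq_left (by push_cast at hzm ⊢; linarith)]
      push_cast; ring
    · rw [max_eq_right hneg.le]
      push_cast; ring
end

section
/- Fix Q < 0, A ∈ ℝ, m' ∈ ℤ, K ∈ ℕ, and reals C', D'. Define Y_{m'+2k} = k(m'+k+1)Q + kD' + C', Z_{m'+2k} = -D', Y_{m'+2k+1} = -(k-1)(m'+k)Q + A - (k+1)D' - C', Z_{m'+2k+1} = D', for 0 ≤ k ≤ K+1 as applicable. Assume Z_{m'+2k} < (m'+2k)Q and Z_{m'+2k+1} > (m'+2k+1)Q for k = 0,…,K, and Y_m < 0 for m'+1 ≤ m ≤ m'+2K+2. Then Y_{m+1} + Y_m = A + 2mQ - max(mQ - Z_m, 0) and Z_{m+1} + Z_m = max(Y_{m+1}, 0) hold for all m' ≤ m ≤ m'+2K+1. -/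
theorem stmt13 (Q A : ℝ) (hQ : Q < 0) (m' : ℤ) (K : ℕ) (C' D' : ℝ) (Y Z : ℤ → ℝ)
    (hY0 : ∀ k : ℕ, k ≤ K + 1 →
      Y (m' + 2 * (k : ℤ)) = (k : ℝ) * ((m' : ℝ) + (k : ℝ) + 1) * Q + (k : ℝ) * D' + C')
    (hZ0 : ∀ k : ℕ, k ≤ K + 1 → Z (m' + 2 * (k : ℤ)) = -D')
    (hY1 : ∀ k : ℕ, k ≤ K →
      Y (m' + 2 * (k : ℤ) + 1) = -(((k : ℝ) - 1) * ((m' : ℝ) + (k : ℝ))) * Q + A - ((k : ℝ) + 1) * D' - C')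
    (hZ1 : ∀ k : ℕ, k ≤ K → Z (m' + 2 * (k : ℤ) + 1) = D')
    (hZlt : ∀ k : ℕ, k ≤ K → Z (m' + 2 * (k : ℤ)) < ((m' + 2 * (k : ℤ) : ℤ) : ℝ) * Q)
    (hZgt : ∀ k : ℕ, k ≤ K → ((m' + 2 * (k : ℤ) + 1 : ℤ) : ℝ) * Q < Z (m' + 2 * (k : ℤ) + 1))
    (hYneg : ∀ m : ℤ, m' + 1 ≤ m → m ≤ m' + 2 * (K : ℤ) + 2 → Y m < 0) :
    ∀ m : ℤ, m' ≤ m → m ≤ m' + 2 * (K : ℤ) + 1 →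
      Y (m + 1) + Y m = A + 2 * (m : ℝ) * Q - max ((m : ℝ) * Q - Z m) 0 ∧
      Z (m + 1) + Z m = max (Y (m + 1)) 0 := by
  intro m hm1 hm2
  obtain ⟨n, rfl⟩ : ∃ n : ℕ, m = m' + n :=
    ⟨(m - m').toNat, by omega⟩
  rcases Nat.even_or_odd n with ⟨k, hk⟩ | ⟨k, hk⟩
  · -- m = m' + 2k
    have hkK : k ≤ K := by omega
    have hme : m' + (n : ℤ) = m' + 2 * (k : ℤ) := by omega
    have hme1 : m' + (n : ℤ) + 1 = m' + 2 * (k : ℤ) + 1 := by omega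
    have e1 := hY0 k (by omega)
    have e2 := hY1 k hkK
    have e3 := hZ0 k (by omega)
    have e4 := hZ1 k hkK
    have e5 := hZlt k hkK
    have hY1neg : Y (m' + (n : ℤ) + 1) < 0 := hYneg _ (by omega) (by omega)
    constructor
    · rw [hme1, hme, e2, e1, e3,
        max_eq_left (by rw [e3] at e5; linarith)]
      push_cast
      ring
    · rw [hme1, hme, e4, e3, max_eq_right (le_of_lt (by rw [hme1] at hY1neg; exact hY1neg))]
      ring
  · -- m = m' + 2k + 1
    have hkK : k ≤ K := by omega
    have hme : m' + (n : ℤ) = m' + 2 * (k : ℤ) + 1 := by omega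
    have hme1 : m' + (n : ℤ) + 1 = m' + 2 * ((k + 1 : ℕ) : ℤ) := by push_cast; omega
    have e1 := hY0 (k + 1) (by omega)
    have e2 := hY1 k hkK
    have e3 := hZ0 (k + 1) (by omega)
    have e4 := hZ1 k hkK
    have e5 := hZgt k hkK
    have hY1neg : Y (m' + (n : ℤ) + 1) < 0 := hYneg _ (by omega) (by omega)
    constructor
    · rw [hme1, hme, e1, e2, e4,
        max_eq_right (by rw [e4] at e5; linarith)]
      push_cast
      ring
    · rw [hme1, hme, e3, e4, max_eq_right (le_of_lt (by rw [hme1] at hY1neg; exact hY1neg))]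
      ring
end

section
/- Fix Q < 0, A ∈ ℝ, ζ_{m-1} = ζ_m = +1, and reals Z_{m-1}, Z_m with mQ - Z_m = 0. Then for every sufficiently large real Z_{m+1} and either choice of ζ_{m+1} ∈ {+1,-1}, the single parity ultradiscrete Painlevé II equation at index m is satisfied; in particular the forward evolution is not unique. -/
/-- Left-hand side of the single parity ultradiscrete Painlevé II equation at index `m`. -/
noncomputable def pudLHS (A mq Zm1 Zm Zp ζ1 ζ0 ζp : ℝ) : EReal :=
  max (((Zp + 3 * Zm + Zm1 : ℝ) : EReal) + S (ζp * ζ0 * ζ1)) <|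
  max (((Zp + 2 * Zm : ℝ) : EReal) + S ζp) <|
  max (((2 * Zm + Zm1 : ℝ) : EReal) + S ζ1) <|
  max (((Zm : ℝ) : EReal) + S ζ0) <|
  max (((Zm + A + 2 * mq : ℝ) : EReal) + S ζ0) <|
  max (((Zp + 2 * Zm + Zm1 + mq : ℝ) : EReal) + S (-(ζp * ζ1))) <|
  max (((Zp + Zm + mq : ℝ) : EReal) + S (-(ζp * ζ0)))
      (((Zm + Zm1 + mq : ℝ) : EReal) + S (-(ζ0 * ζ1)))

/-- Right-hand side of the single parity ultradiscrete Painlevé II equation. -/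
noncomputable def pudRHS (A mq Zm1 Zm Zp ζ1 ζ0 ζp : ℝ) : EReal :=
  max (((Zp + 3 * Zm + Zm1 : ℝ) : EReal) + S (-(ζp * ζ0 * ζ1))) <|
  max (((Zp + 2 * Zm : ℝ) : EReal) + S (-ζp)) <|
  max (((2 * Zm + Zm1 : ℝ) : EReal) + S (-ζ1)) <|
  max (((Zm : ℝ) : EReal) + S (-ζ0)) <|
  max (((Zm + A + 2 * mq : ℝ) : EReal) + S (-ζ0)) <|
  max (((Zp + 2 * Zm + Zm1 + mq : ℝ) : EReal) + S (ζp * ζ1)) <|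
  max (((Zp + Zm + mq : ℝ) : EReal) + S (ζp * ζ0)) <|
  max (((Zm + Zm1 + mq : ℝ) : EReal) + S (ζ0 * ζ1)) ((mq : ℝ) : EReal)

lemma aux1 (A Zm1 Zm Zp : ℝ) (h1 : Zm1 ≤ Zp) (h2 : -Zm ≤ Zp) (h3 : Zm + A ≤ Zp) :
    (Zp + 3 * Zm + Zm1) ⊔ ((Zp + 2 * Zm) ⊔ ((2 * Zm + Zm1) ⊔ (Zm ⊔ (Zm + A + 2 * Zm))))
      = (Zp + 2 * Zm + Zm1 + Zm) ⊔ ((Zp + Zm + Zm) ⊔ ((Zm + Zm1 + Zm) ⊔ Zm)) := by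
  apply le_antisymm <;> simp only [max_le_iff] <;> and_intros <;> simp only [le_max_iff] <;>
    first
      | (left; linarith)
      | (right; left; linarith)
      | (right; right; left; linarith)
      | (right; right; right; left; linarith)
      | (right; right; right; right; linarith)

lemma aux2 (A Zm1 Zm Zp : ℝ) (h1 : Zm1 ≤ Zp) (h2 : -Zm ≤ Zp) (h3 : Zm + A ≤ Zp) :
    (2 * Zm + Zm1) ⊔ (Zm ⊔ ((Zm + A + 2 * Zm) ⊔ ((Zp + 2 * Zm + Zm1 + Zm) ⊔ (Zp + Zm + Zm))))
      = (Zp + 3 * Zm + Zm1) ⊔ ((Zp + 2 * Zm) ⊔ ((Zm + Zm1 + Zm) ⊔ Zm)) := by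
  apply le_antisymm <;> simp only [max_le_iff] <;> and_intros <;> simp only [le_max_iff] <;>
    first
      | (left; linarith)
      | (right; left; linarith)
      | (right; right; left; linarith)
      | (right; right; right; left; linarith)
      | (right; right; right; right; linarith)

theorem stmt15 (Q A : ℝ) (hQ : Q < 0) (m : ℤ) (Zm1 Zm : ℝ)
    (h : (m : ℝ) * Q - Zm = 0) :
    ∃ B : ℝ, ∀ Zp : ℝ, B ≤ Zp → ∀ ζp : ℝ, (ζp = 1 ∨ ζp = -1) →
      pudLHS A ((m : ℝ) * Q) Zm1 Zm Zp 1 1 ζp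
        = pudRHS A ((m : ℝ) * Q) Zm1 Zm Zp 1 1 ζp := by
  have hm : (m : ℝ) * Q = Zm := by linarith
  refine ⟨max Zm1 (max (-Zm) (Zm + A)), fun Zp hZp ζp hζp => ?_⟩
  have h1 : Zm1 ≤ Zp := le_trans (le_max_left _ _) hZp
  have h2 : -Zm ≤ Zp := le_trans (le_trans (le_max_left _ _) (le_max_right _ _)) hZp
  have h3 : Zm + A ≤ Zp := le_trans (le_trans (le_max_right _ _) (le_max_right _ _)) hZp
  have hS1 : S 1 = 0 := if_pos rfl
  have hSm1 : S (-1) = ⊥ := if_neg (by norm_num)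
  have hb1 : ∀ a : EReal, max a ⊥ = a := fun a => max_eq_left bot_le
  have hb2 : ∀ a : EReal, max ⊥ a = a := fun a => max_eq_right bot_le
  have hcmax : ∀ a b : ℝ, max (a : EReal) (b : EReal) = ((max a b : ℝ) : EReal) :=
    fun a b => (Monotone.map_max (fun _ _ hab => EReal.coe_le_coe_iff.mpr hab)).symm
  rcases hζp with rfl | rfl <;>
    simp only [pudLHS, pudRHS, one_mul, mul_one, neg_neg, hm, hS1, hSm1, add_zero,
      EReal.add_bot, hb1, hb2, hcmax, EReal.coe_eq_coe_iff]
  · exact aux1 A Zm1 Zm Zp h1 h2 h3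
  · exact aux2 A Zm1 Zm Zp h1 h2 h3
end

section
/- Fix Q < 0 and A ∈ ℝ. Suppose Y, Z : ℤ → ℝ satisfy, for all m, Z_m + Z_{m+1} > 0 together with Y_{m+1} + Y_m = A + 2mQ - max(mQ - Z_m, 0) and Z_{m+1} + Z_m = max(Y_{m+1}, 0). Then for each m, either Z_{m+1} + 2Z_m + Z_{m-1} = A + 2mQ or Z_{m+1} + Z_m + Z_{m-1} = A + mQ; consequently there exists m with Z_m + Z_{m+1} ≤ 0, a contradiction — hence no such pair (Y, Z) exists. -/
theorem stmt17 (Q A : ℝ) (hQ : Q < 0) :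
    ¬ ∃ (Y Z : ℤ → ℝ), ∀ m : ℤ,
        0 < Z m + Z (m + 1) ∧
        Y (m + 1) + Y m = A + 2 * (m : ℝ) * Q - max ((m : ℝ) * Q - Z m) 0 ∧
        Z (m + 1) + Z m = max (Y (m + 1)) 0 := by
  rintro ⟨Y, Z, h⟩
  have key : ∀ m : ℤ, 0 < A + 2 * (m : ℝ) * Q := by
    intro m
    obtain ⟨hpos, heq, hmax⟩ := h m
    obtain ⟨hpos', -, hmax'⟩ := h (m - 1)
    rw [sub_add_cancel] at hmax' hpos'
    have hY1 : Y (m + 1) = Z (m + 1) + Z m := by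
      rcases le_or_gt (Y (m + 1)) 0 with hle | hlt
      · rw [max_eq_right hle] at hmax; linarith
      · rw [max_eq_left hlt.le] at hmax; linarith
    have hY0 : Y m = Z m + Z (m - 1) := by
      rcases le_or_gt (Y m) 0 with hle | hlt
      · rw [max_eq_right hle] at hmax'; linarith
      · rw [max_eq_left hlt.le] at hmax'; linarith
    have hmr := le_max_right ((m : ℝ) * Q - Z m) 0
    linarith
  obtain ⟨m, hm⟩ := exists_int_gt (A / (-2 * Q))
  have h2Q : (0:ℝ) < -2 * Q := by linarith
  rw [div_lt_iff₀ h2Q] at hm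
  have := key m
  nlinarith
end

section
/- Let w : ℤ → ℝ satisfy the q-Airy equation w(m+1) - q^m·w(m) + w(m-1) = 0 for all m ∈ ℤ, where 0 < q < 1 is fixed. For N ∈ ℤ define g^{(N)}(m) as follows: for N > 0 it is the N×N determinant with (i,j) entry w(m - i + 2j - 1) (indices i, j from 1 to N); g^{(0)}(m) = 1; and for N < 0 it is the |N|×|N| determinant with (i,j) entry w(m + i - 2j) (indices from 1 to |N|). Then for all M ∈ ℤ with M < 0 and all m ∈ ℤ, g^{(M)}(m) = g^{(-M)}(m - (-M)). -/
/-- The Casorati-type determinant `g^{(N)}(m)` built from a solution `w` of the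
q-Airy equation: for `N > 0` an `N×N` determinant with (1-based) entry
`w(m - i + 2j - 1)`, for `N = 0` the value `1`, and for `N < 0` an `|N|×|N|`
determinant with (1-based) entry `w(m + i - 2j)`. -/
noncomputable def g (w : ℤ → ℝ) (N : ℤ) (m : ℤ) : ℝ :=
  if 0 < N then
    (Matrix.of fun i j : Fin N.toNat => w (m - (i : ℤ) + 2 * (j : ℤ))).det
  else if N = 0 then 1
  else
    (Matrix.of fun i j : Fin (-N).toNat => w (m + (i : ℤ) - 2 * (j : ℤ) - 1)).det

theorem stmt18 (q : ℝ) (hq0 : 0 < q) (hq1 : q < 1) (w : ℤ → ℝ)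
    (hw : ∀ m : ℤ, w (m + 1) - q ^ m * w m + w (m - 1) = 0) :
    ∀ M : ℤ, M < 0 → ∀ m : ℤ, g w M m = g w (-M) (m - (-M)) := by
  intro M hM m
  have hN : (0 : ℤ) < -M := by omega
  unfold g
  rw [if_neg (by omega : ¬ (0 < M)), if_neg (by omega : ¬ (M = 0)), if_pos hN]
  set n := (-M).toNat with hn
  have hNn : ((n : ℤ)) = -M := Int.toNat_of_nonneg hN.le
  have hnpos : 0 < n := by omega
  have key : (Matrix.of fun i j : Fin n => w (m + (i : ℤ) - 2 * (j : ℤ) - 1)) =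
      ((Matrix.of fun i j : Fin n =>
        w (m - -M - (i : ℤ) + 2 * (j : ℤ)))).submatrix Fin.revPerm Fin.revPerm := by
    ext i j
    simp only [Matrix.submatrix_apply, Matrix.transpose_apply, Matrix.of_apply,
      Fin.revPerm_apply]
    congr 1
    have hi : ((Fin.rev i : Fin n) : ℤ) = (n : ℤ) - 1 - (i : ℤ) := by
      have := Fin.val_rev i
      have hi' : (i : ℕ) < n := i.isLt
      omega
    have hj : ((Fin.rev j : Fin n) : ℤ) = (n : ℤ) - 1 - (j : ℤ) := by
      have := Fin.val_rev j
      have hj' : (j : ℕ) < n := j.isLt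
      omega
    rw [hi, hj, hNn]
    ring
  rw [key, Matrix.det_submatrix_equiv_self]
end
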